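/- arXiv:0806.4052 — 3 statements merged into one kernel-verified Lean document; each statement's English description precedes it below -/
import Mathlib

section
/- Let D be a rotation group on a three-dimensional real vector space V and let v, w be linearly independent. The unique rotation r with r : [v,w] ↦ [w,v] satisfies r² = id, and there exists λ > 0 with r v = λ w and r(λ w) = v. -/
/-- The ray (half-line) spanned by `v`: all nonnegative multiples of `v`. -/
def Ray' {V : Type*} [AddCommGroup V] [Module ℝ V] (v : V) : Set V :=
  {x | ∃ c : ℝ, 0 ≤ c ∧ x = c • v}

/-- The half-plane `ℝ v + ℝ≥0 w`. -/
def HalfPlane {V : Type*} [AddCommGroup V] [Module ℝ V] (v w : V) : Set V :=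
  {x | ∃ a b : ℝ, 0 ≤ b ∧ x = a • v + b • w}

/-- `D` is a rotation group: for any two pairs of (half-plane, ray on its boundary)
there is exactly one element of `D` mapping the first pair to the second. -/
def IsRotationGroup {V : Type*} [AddCommGroup V] [Module ℝ V]
    (D : Subgroup (V ≃ₗ[ℝ] V)) : Prop :=
  ∀ v w v' w' : V, LinearIndependent ℝ ![v, w] → LinearIndependent ℝ ![v', w'] →
    ∃! d : V ≃ₗ[ℝ] V, d ∈ D ∧
      (d : V ≃ₗ[ℝ] V) '' HalfPlane v w = HalfPlane v' w' ∧
      (d : V ≃ₗ[ℝ] V) '' Ray' v = Ray' v'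

/-- `w ⊥ v` : some rotation sends `w` to `-w` and fixes `v`. -/
def Perp {V : Type*} [AddCommGroup V] [Module ℝ V]
    (D : Subgroup (V ≃ₗ[ℝ] V)) (w v : V) : Prop :=
  ∃ r ∈ D, r w = -w ∧ r v = v

/-!
Write `r v = l • w` and `r w = a • w + b • v` with `l, b > 0`. On the plane spanned by `v, w`
the map `r` has determinant `-l b < 0`, so it has a real eigenvalue `t ≠ 0` with eigenvector
`m = b • v + t • w`. In the basis `m, w` the square `r ^ 2` is upper triangular with diagonal
`t ^ 2, (t - a) ^ 2`, both positive, so `r ^ 2` maps the pair `[m, w]` to itself and uniqueness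
in the rotation group forces `r ^ 2 = 1`.
-/

section Flags

variable {V : Type*} [AddCommGroup V] [Module ℝ V]

lemma image_halfPlane (d : V ≃ₗ[ℝ] V) (x y : V) :
    d '' HalfPlane x y = HalfPlane (d x) (d y) := by
  ext z
  constructor
  · rintro ⟨u, ⟨a, b, hb, rfl⟩, rfl⟩
    exact ⟨a, b, hb, by simp⟩
  · rintro ⟨a, b, hb, rfl⟩
    exact ⟨a • x + b • y, ⟨a, b, hb, rfl⟩, by simp⟩

lemma image_ray (d : V ≃ₗ[ℝ] V) (x : V) : d '' Ray' x = Ray' (d x) := by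
  ext z
  constructor
  · rintro ⟨u, ⟨c, hc, rfl⟩, rfl⟩
    exact ⟨c, hc, by simp⟩
  · rintro ⟨c, hc, rfl⟩
    exact ⟨c • x, ⟨c, hc, rfl⟩, by simp⟩

lemma self_mem_ray (x : V) : x ∈ Ray' x := ⟨1, zero_le_one, (one_smul ℝ x).symm⟩

lemma right_mem_halfPlane (x y : V) : y ∈ HalfPlane x y := ⟨0, 1, zero_le_one, by simp⟩

lemma ray_smul {c : ℝ} (hc : 0 < c) (x : V) : Ray' (c • x) = Ray' x := by
  ext z
  constructor
  · rintro ⟨t, ht, rfl⟩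
    exact ⟨t * c, by positivity, by rw [smul_smul]⟩
  · rintro ⟨t, ht, rfl⟩
    exact ⟨t / c, by positivity, by rw [smul_smul, div_mul_cancel₀ t hc.ne']⟩

lemma halfPlane_smul_left {c : ℝ} (hc : c ≠ 0) (x y : V) :
    HalfPlane (c • x) y = HalfPlane x y := by
  ext z
  constructor
  · rintro ⟨a, b, hb, rfl⟩
    exact ⟨a * c, b, hb, by rw [smul_smul]⟩
  · rintro ⟨a, b, hb, rfl⟩
    exact ⟨a / c, b, hb, by rw [smul_smul, div_mul_cancel₀ a hc]⟩

lemma halfPlane_smul_add_smul {β : ℝ} (hβ : 0 < β) (α : ℝ) (x y : V) :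
    HalfPlane x (α • x + β • y) = HalfPlane x y := by
  ext z
  constructor
  · rintro ⟨a, b, hb, rfl⟩
    exact ⟨a + b * α, b * β, by positivity, by module⟩
  · rintro ⟨a, b, hb, rfl⟩
    refine ⟨a - b / β * α, b / β, by positivity, ?_⟩
    match_scalars
    · ring
    · field_simp

lemma exists_pos_smul_of_image_ray_eq {d : V ≃ₗ[ℝ] V} {x y : V} (h : d '' Ray' x = Ray' y)
    (hx : x ≠ 0) : ∃ l : ℝ, 0 < l ∧ d x = l • y := by
  obtain ⟨l, hl, hdx⟩ : d x ∈ Ray' y := h ▸ Set.mem_image_of_mem d (self_mem_ray x)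
  refine ⟨l, hl.lt_of_ne ?_, hdx⟩
  rintro rfl
  exact hx (d.map_eq_zero_iff.mp (by simpa using hdx))

lemma exists_pos_smul_of_image_halfPlane_eq {d : V ≃ₗ[ℝ] V} {x y : V}
    (h : d '' HalfPlane x y = HalfPlane y x) (hxy : LinearIndependent ℝ ![x, y]) {l : ℝ}
    (hl : l ≠ 0) (hdx : d x = l • y) : ∃ a b : ℝ, 0 < b ∧ d y = a • y + b • x := by
  obtain ⟨a, b, hb, hdy⟩ : d y ∈ HalfPlane y x :=
    h ▸ Set.mem_image_of_mem d (right_mem_halfPlane x y)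
  refine ⟨a, b, hb.lt_of_ne ?_, hdy⟩
  rintro rfl
  have hxy0 : a • x - l • y = 0 :=
    d.map_eq_zero_iff.mp (by simp [hdx, hdy, smul_smul, mul_comm])
  have := LinearIndependent.pair_iff.mp hxy a (-l) (by simpa [sub_eq_add_neg] using hxy0)
  exact hl (neg_eq_zero.mp this.2)

end Flags

namespace IsRotationGroup

variable {V : Type*} [AddCommGroup V] [Module ℝ V] {D : Subgroup (V ≃ₗ[ℝ] V)}

theorem eq_one_of_apply_eq {d : V ≃ₗ[ℝ] V} (hD : IsRotationGroup D) (hd : d ∈ D) {x y : V}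
    (hxy : LinearIndependent ℝ ![x, y]) {c α β : ℝ} (hc : 0 < c) (hβ : 0 < β)
    (hdx : d x = c • x) (hdy : d y = α • x + β • y) : d = 1 := by
  obtain ⟨e, -, he⟩ := hD x y x y hxy hxy
  refine (he d ⟨hd, ?_, ?_⟩).trans (he 1 ⟨one_mem D, ?_, ?_⟩).symm
  · rw [image_halfPlane, hdx, hdy, halfPlane_smul_left hc.ne', halfPlane_smul_add_smul hβ]
  · rw [image_ray, hdx, ray_smul hc]
  · exact Set.image_id _
  · exact Set.image_id _

theorem sq_eq_one_of_apply_eq {r : V ≃ₗ[ℝ] V} (hD : IsRotationGroup D) (hr : r ∈ D)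
    {v w : V} (hvw : LinearIndependent ℝ ![v, w]) {l a b : ℝ} (hlb : 0 < l * b)
    (hrv : r v = l • w) (hrw : r w = a • w + b • v) : r ^ 2 = 1 := by
  obtain ⟨t, ht⟩ : ∃ t : ℝ, 1 * (t * t) + -a * t + -(l * b) = 0 :=
    exists_quadratic_eq_zero one_ne_zero
      ⟨√(a ^ 2 + 4 * (l * b)), by rw [discrim, ← sq, Real.sq_sqrt (by positivity)]; ring⟩
  have ht0 : t ≠ 0 := by rintro rfl; linarith
  have hta : t - a ≠ 0 := by
    intro h
    obtain rfl : a = t := by linarith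
    linarith
  set m := b • v + t • w
  have hrm : r m = t • m := by
    simp only [m, map_add, map_smul, hrv, hrw]
    linear_combination (norm := module) (-ht) • w
  have hmw : LinearIndependent ℝ ![m, w] := by
    refine LinearIndependent.pair_iff.mpr fun s u h => ?_
    obtain ⟨hsb, hst⟩ := LinearIndependent.pair_iff.mp hvw (s * b) (s * t + u) (by
      rw [← h]; module)
    have hs : s = 0 := (mul_eq_zero.mp hsb).resolve_right (by rintro rfl; simp at hlb)
    exact ⟨hs, by simpa [hs] using hst⟩
  refine hD.eq_one_of_apply_eq (pow_mem hr 2) hmw (sq_pos_of_ne_zero ht0)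
    (sq_pos_of_ne_zero hta) (α := a) ?_ ?_
  · rw [sq, LinearEquiv.mul_apply, hrm, map_smul, hrm, smul_smul, sq]
  · rw [sq, LinearEquiv.mul_apply, hrw, map_add, map_smul, map_smul, hrw, hrv]
    linear_combination (norm := module) (-ht) • w

end IsRotationGroup

theorem stmt2_general {V : Type*} [AddCommGroup V] [Module ℝ V]
    (D : Subgroup (V ≃ₗ[ℝ] V)) (hD : IsRotationGroup D)
    (v w : V) (hvw : LinearIndependent ℝ ![v, w])
    (r : V ≃ₗ[ℝ] V) (hr : r ∈ D)
    (hH : (r : V ≃ₗ[ℝ] V) '' HalfPlane v w = HalfPlane w v)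
    (hR : (r : V ≃ₗ[ℝ] V) '' Ray' v = Ray' w) :
    r ^ 2 = 1 ∧ ∃ l : ℝ, 0 < l ∧ r v = l • w ∧ r (l • w) = v := by
  obtain ⟨l, hl, hrv⟩ := exists_pos_smul_of_image_ray_eq hR (by simpa using hvw.ne_zero 0)
  obtain ⟨a, b, hb, hrw⟩ := exists_pos_smul_of_image_halfPlane_eq hH hvw hl.ne' hrv
  have hr2 : r ^ 2 = 1 := hD.sq_eq_one_of_apply_eq hr hvw (mul_pos hl hb) hrv hrw
  refine ⟨hr2, l, hl, hrv, ?_⟩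
  rw [← hrv, ← LinearEquiv.mul_apply, ← sq, hr2]
  rfl

theorem stmt2 {V : Type*} [AddCommGroup V] [Module ℝ V]
    (hdim : Module.finrank ℝ V = 3)
    (D : Subgroup (V ≃ₗ[ℝ] V)) (hD : IsRotationGroup D)
    (v w : V) (hvw : LinearIndependent ℝ ![v, w])
    (r : V ≃ₗ[ℝ] V) (hr : r ∈ D)
    (hH : (r : V ≃ₗ[ℝ] V) '' HalfPlane v w = HalfPlane w v)
    (hR : (r : V ≃ₗ[ℝ] V) '' Ray' v = Ray' w) :
    r ^ 2 = 1 ∧ ∃ l : ℝ, 0 < l ∧ r v = l • w ∧ r (l • w) = v :=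
  stmt2_general D hD v w hvw r hr hH hR
end

section
/- Every orbit of a rotation group D on V \ {0} meets every ray in exactly one point. -/
/-!
Existence is transitivity of `D` on flags. For uniqueness it suffices to show that `g ∈ D` with
`g u = l • u`, `l > 0`, has `l = 1`. By the uniqueness clause in the definition of a rotation group,
an element of `D` mapping a flag `(ℝ≥0 u, ℝ u + ℝ≥0 z)` to itself is `1`. An element scaling `u` by
a positive factor does so as soon as the class of `z` is an eigenvector, with positive eigenvalue,
of the induced map on the plane `V ⧸ ℝ u`; such an eigenvector exists when that map has negative
determinant. The half-turn `σ ∈ D` taking `(u, w)` to `(-u, w)` is an involution acting on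
`V ⧸ ℝ u` with determinant `-1`, so one of `g`, `σ * g` acts with negative determinant; its square
is then `1` and scales `u` by `l ^ 2`.
-/

open Module Submodule

section Flags

variable {V W F : Type*} [AddCommGroup V] [Module ℝ V] [AddCommGroup W] [Module ℝ W]
  [FunLike F V W] [LinearMapClass F ℝ V W]

theorem image_halfPlane_s9 (f : F) (v w : V) :
    f '' HalfPlane v w = HalfPlane (f v) (f w) := by
  ext x
  constructor
  · rintro ⟨y, ⟨a, b, hb, rfl⟩, rfl⟩
    exact ⟨a, b, hb, by simp⟩
  · rintro ⟨a, b, hb, rfl⟩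
    exact ⟨a • v + b • w, ⟨a, b, hb, rfl⟩, by simp⟩

theorem image_ray' (f : F) (v : V) : f '' Ray' v = Ray' (f v) := by
  ext x
  constructor
  · rintro ⟨y, ⟨c, hc, rfl⟩, rfl⟩
    exact ⟨c, hc, by simp⟩
  · rintro ⟨c, hc, rfl⟩
    exact ⟨c • v, ⟨c, hc, rfl⟩, by simp⟩

theorem ray'_smul {a : ℝ} (ha : 0 < a) (v : V) : Ray' (a • v) = Ray' v := by
  ext x
  constructor
  · rintro ⟨t, ht, rfl⟩
    exact ⟨t * a, by positivity, by rw [smul_smul]⟩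
  · rintro ⟨t, ht, rfl⟩
    exact ⟨t / a, by positivity, by rw [smul_smul, div_mul_cancel₀ _ ha.ne']⟩

theorem halfPlane_smul_smul_add {a b : ℝ} (ha : a ≠ 0) (hb : 0 < b) (c : ℝ) (v w : V) :
    HalfPlane (a • v) (b • w + c • v) = HalfPlane v w := by
  ext x
  constructor
  · rintro ⟨s, t, ht, rfl⟩
    exact ⟨s * a + t * c, t * b, by positivity, by module⟩
  · rintro ⟨s, t, ht, rfl⟩
    refine ⟨(s - t / b * c) / a, t / b, by positivity, ?_⟩
    rw [smul_add, smul_smul, smul_smul, smul_smul, div_mul_cancel₀ _ ha, div_mul_cancel₀ _ hb.ne']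
    module

theorem exists_pos_smul_of_mem_ray' {x v : V} (hx : x ∈ Ray' v) (hx0 : x ≠ 0) :
    ∃ a : ℝ, 0 < a ∧ x = a • v := by
  obtain ⟨a, ha, rfl⟩ := hx
  exact ⟨a, ha.lt_of_ne (by rintro rfl; simp at hx0), rfl⟩

end Flags

theorem exists_pos_sq_sub_mul_add_eq_zero {t d : ℝ} (hd : d < 0) :
    ∃ μ > 0, μ ^ 2 - t * μ + d = 0 := by
  have hdisc : 0 ≤ t ^ 2 - 4 * d := by nlinarith [sq_nonneg t]
  have hsq := Real.sq_sqrt hdisc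
  have hlt : |t| < √(t ^ 2 - 4 * d) := by
    rw [← Real.sqrt_sq_eq_abs]; exact Real.sqrt_lt_sqrt (sq_nonneg t) (by linarith)
  refine ⟨(t + √(t ^ 2 - 4 * d)) / 2, by linarith [neg_abs_le t], ?_⟩
  linear_combination hsq / 4

namespace LinearMap

open Polynomial

variable {K W : Type*} [Field K] [AddCommGroup W] [Module K W] [FiniteDimensional K W]

theorem charpoly_of_finrank_eq_two (h : finrank K W = 2) (f : Module.End K W) :
    f.charpoly = X ^ 2 - C (trace K W f) * X + C (LinearMap.det f) := by
  let b := Module.finBasisOfFinrankEq K W h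
  rw [← charpoly_toMatrix f b, Matrix.charpoly_fin_two, trace_eq_matrix_trace K b, det_toMatrix]

theorem det_eq_neg_one_of_mul_self_eq_one (h : finrank K W = 2) {s : Module.End K W}
    (hs : s * s = 1) (h1 : s ≠ 1) (hm1 : s ≠ -1) : LinearMap.det s = -1 := by
  have : Nontrivial W := Module.nontrivial_of_finrank_eq_succ h
  -- Cayley–Hamilton with `s * s = 1`; if `trace s ≠ 0` it exhibits `s` as a scalar, hence `±1`.
  have hCH : trace K W s • s = (1 + LinearMap.det s) • (1 : Module.End K W) := by
    have := aeval_self_charpoly s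
    rw [charpoly_of_finrank_eq_two h] at this
    simp only [map_add, map_sub, map_mul, aeval_C, aeval_X, sq, hs,
      Algebra.algebraMap_eq_smul_one, smul_mul_assoc, one_mul] at this
    rw [add_smul, one_smul]
    linear_combination (norm := module) -this
  by_cases ht : trace K W s = 0
  · rw [ht, zero_smul, eq_comm, smul_eq_zero] at hCH
    linear_combination hCH.resolve_right one_ne_zero
  · exfalso
    set c := (trace K W s)⁻¹ * (1 + LinearMap.det s)
    have hsc : s = c • 1 := by
      rw [mul_smul, ← hCH, smul_smul, inv_mul_cancel₀ ht, one_smul]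
    have hc : c * c = 1 := smul_left_injective K (one_ne_zero (α := Module.End K W)) <|
      calc (c * c) • (1 : Module.End K W) = s * s := by rw [hsc, smul_mul_smul_comm, one_mul]
        _ = 1 := hs
        _ = (1 : K) • 1 := (one_smul K 1).symm
    rcases mul_self_eq_one_iff.mp hc with hc1 | hc1
    · exact h1 (by rw [hsc, hc1, one_smul])
    · exact hm1 (by rw [hsc, hc1, neg_one_smul])

end LinearMap

theorem LinearMap.exists_pos_hasEigenvalue_of_det_neg {W : Type*} [AddCommGroup W] [Module ℝ W]
    [FiniteDimensional ℝ W] (h : finrank ℝ W = 2) {f : Module.End ℝ W}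
    (hf : LinearMap.det f < 0) : ∃ μ > 0, f.HasEigenvalue μ := by
  obtain ⟨μ, hμ, hroot⟩ := exists_pos_sq_sub_mul_add_eq_zero (t := trace ℝ W f) hf
  refine ⟨μ, hμ, (Module.End.hasEigenvalue_iff_isRoot_charpoly f μ).mpr ?_⟩
  simpa [LinearMap.charpoly_of_finrank_eq_two h] using hroot

section Quotient

variable {K M : Type*} [Field K] [AddCommGroup M] [Module K M]

theorem finrank_quotient_span_singleton [FiniteDimensional K M] {n : ℕ}
    (h : finrank K M = n + 1) {u : M} (hu : u ≠ 0) : finrank K (M ⧸ K ∙ u) = n := by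
  have := (K ∙ u).finrank_quotient_add_finrank
  rw [finrank_span_singleton hu, h] at this
  omega

theorem linearIndependent_pair_iff_notMem_span_singleton {x y : M} (hx : x ≠ 0) :
    LinearIndependent K ![x, y] ↔ y ∉ K ∙ x := by
  rw [LinearIndependent.pair_iff' hx, mem_span_singleton, not_exists]

theorem exists_notMem_sub_smul_mem_of_hasEigenvalue_mapQ {p : Submodule K M}
    {f : M →ₗ[K] M} (hf : p ≤ p.comap f) {μ : K}
    (h : Module.End.HasEigenvalue (p.mapQ p f hf) μ) : ∃ z ∉ p, f z - μ • z ∈ p := by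
  obtain ⟨z', hz'⟩ := h.exists_hasEigenvector
  obtain ⟨z, rfl⟩ := Submodule.Quotient.mk_surjective p z'
  refine ⟨z, (Submodule.Quotient.mk_eq_zero p).not.mp hz'.2, (Submodule.Quotient.eq p).mp ?_⟩
  simpa using hz'.apply_eq_smul

end Quotient

section LineQuotient

variable {V : Type*} [AddCommGroup V] [Module ℝ V]

def lineQuotMap (u : V) (d : V ≃ₗ[ℝ] V) (h : d u ∈ ℝ ∙ u) : Module.End ℝ (V ⧸ ℝ ∙ u) :=
  (ℝ ∙ u).mapQ (ℝ ∙ u) d ((span_singleton_le_iff_mem _ _).mpr h)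

variable {u : V}

@[simp]
theorem lineQuotMap_mk {d : V ≃ₗ[ℝ] V} (h : d u ∈ ℝ ∙ u) (x : V) :
    lineQuotMap u d h (Submodule.Quotient.mk x) = Submodule.Quotient.mk (d x) :=
  rfl

theorem lineQuotMap_mul {d₁ d₂ : V ≃ₗ[ℝ] V} (h₁ : d₁ u ∈ ℝ ∙ u) (h₂ : d₂ u ∈ ℝ ∙ u)
    (h : (d₁ * d₂) u ∈ ℝ ∙ u) :
    lineQuotMap u (d₁ * d₂) h = lineQuotMap u d₁ h₁ * lineQuotMap u d₂ h₂ :=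
  linearMap_qext _ rfl

theorem exists_ne_zero_apply_eq_smul (hu : u ≠ 0) {d : V ≃ₗ[ℝ] V} (h : d u ∈ ℝ ∙ u) :
    ∃ a : ℝ, a ≠ 0 ∧ d u = a • u := by
  obtain ⟨a, ha⟩ := mem_span_singleton.mp h
  refine ⟨a, ?_, ha.symm⟩
  rintro rfl
  exact hu (d.map_eq_zero_iff.mp (by simpa using ha.symm))

theorem det_lineQuotMap_ne_zero [FiniteDimensional ℝ V] (hu : u ≠ 0) {d : V ≃ₗ[ℝ] V}
    (h : d u ∈ ℝ ∙ u) : LinearMap.det (lineQuotMap u d h) ≠ 0 := by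
  obtain ⟨a, ha0, ha⟩ := exists_ne_zero_apply_eq_smul hu h
  rw [Ne, LinearMap.det_eq_zero_iff_ker_ne_bot, not_not, LinearMap.ker_eq_bot']
  intro x hx
  obtain ⟨x, rfl⟩ := Submodule.Quotient.mk_surjective _ x
  rw [lineQuotMap_mk, Submodule.Quotient.mk_eq_zero] at hx
  obtain ⟨t, ht⟩ := mem_span_singleton.mp hx
  have : x = (t / a) • u :=
    d.injective (by rw [← ht, map_smul, ha, smul_smul, div_mul_cancel₀ _ ha0])
  rw [Submodule.Quotient.mk_eq_zero, this]
  exact smul_mem _ _ (mem_span_singleton_self u)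

end LineQuotient

namespace IsRotationGroup

variable {V : Type*} [AddCommGroup V] [Module ℝ V] {D : Subgroup (V ≃ₗ[ℝ] V)} {u : V}

theorem exists_mem_ray'_halfPlane (hD : IsRotationGroup D) {v w v' w' : V}
    (h : LinearIndependent ℝ ![v, w]) (h' : LinearIndependent ℝ ![v', w']) :
    ∃ d ∈ D, d v ∈ Ray' v' ∧ d w ∈ HalfPlane v' w' := by
  obtain ⟨d, ⟨hd, hhp, hray⟩, -⟩ := hD v w v' w' h h'
  refine ⟨d, hd, ?_, ?_⟩
  · rw [← hray]; exact ⟨v, ⟨1, zero_le_one, (one_smul ℝ v).symm⟩, rfl⟩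
  · rw [← hhp]; exact ⟨w, ⟨0, 1, zero_le_one, by simp⟩, rfl⟩

-- The hypotheses say that `d` maps the flag `(Ray' v, HalfPlane v w)` to itself.
theorem eq_one_of_apply_eq_s9 (hD : IsRotationGroup D) {v w : V} (h : LinearIndependent ℝ ![v, w])
    {d : V ≃ₗ[ℝ] V} (hd : d ∈ D) {a b c : ℝ} (ha : 0 < a) (hb : 0 < b)
    (hdv : d v = a • v) (hdw : d w = b • w + c • v) : d = 1 := by
  obtain ⟨e, -, he⟩ := hD v w v w h h
  refine (he d ⟨hd, ?_, ?_⟩).trans (he 1 ⟨D.one_mem, by simp, by simp⟩).symm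
  · rw [image_halfPlane_s9, hdv, hdw, halfPlane_smul_smul_add ha.ne' hb]
  · rw [image_ray', hdv, ray'_smul ha]

theorem exists_half_turn (hD : IsRotationGroup D) {w : V} (h : LinearIndependent ℝ ![u, w]) :
    ∃ σ ∈ D, σ * σ = 1 ∧ σ u = -u ∧ ∃ b : ℝ, 0 < b ∧ ∃ c : ℝ, σ w = b • w + c • u := by
  have hu : u ≠ 0 := h.ne_zero 0
  have h' : LinearIndependent ℝ ![-u, w] := LinearIndependent.pair_iff.mpr fun s t hst => by
    simpa using LinearIndependent.pair_iff.mp h (-s) t (by rwa [neg_smul, ← smul_neg])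
  obtain ⟨σ, hσD, hσu, a, b, hb, hσw⟩ := hD.exists_mem_ray'_halfPlane h h'
  obtain ⟨c, hc, hσu⟩ := exists_pos_smul_of_mem_ray' hσu (by simpa using hu)
  have hb : 0 < b := by
    refine hb.lt_of_ne fun hb0 => (LinearIndependent.pair_iff' hu).mp h (a / c) ?_
    apply σ.injective
    rw [hσw, ← hb0, map_smul, hσu, smul_smul, div_mul_cancel₀ _ hc.ne']
    module
  have hσσ : σ * σ = 1 := by
    refine hD.eq_one_of_apply_eq_s9 h (D.mul_mem hσD hσD) (mul_pos hc hc) (mul_pos hb hb)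
      (c := a * c - b * a) ?_ ?_ <;>
    simp only [LinearEquiv.mul_apply, map_add, map_smul, map_neg, hσu, hσw] <;>
    module
  have hc1 : c * c = 1 := smul_left_injective ℝ hu <| by
    simpa [hσu, smul_smul] using LinearEquiv.congr_fun hσσ u
  obtain rfl : c = 1 := by nlinarith
  exact ⟨σ, hσD, hσσ, by simpa using hσu, b, hb, -a, by rw [hσw]; module⟩

theorem lineQuotMap_ne_one (hD : IsRotationGroup D) (hu : u ≠ 0)
    (hW : finrank ℝ (V ⧸ ℝ ∙ u) = 2) {σ : V ≃ₗ[ℝ] V} (hσD : σ ∈ D) (hσu : σ u = -u)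
    (h : σ u ∈ ℝ ∙ u) : lineQuotMap u σ h ≠ 1 := by
  intro h1
  have hfix : ∀ x : V ⧸ ℝ ∙ u, ∃ y : V, Submodule.Quotient.mk y = x ∧ σ y = y := by
    intro x
    obtain ⟨x, rfl⟩ := Submodule.Quotient.mk_surjective _ x
    have hx : σ x - x ∈ ℝ ∙ u := (Submodule.Quotient.eq _).mp <| by
      rw [← lineQuotMap_mk h, h1, Module.End.one_apply]
    obtain ⟨t, ht⟩ := mem_span_singleton.mp hx
    refine ⟨x + (t / 2) • u, (Submodule.Quotient.eq _).mpr ?_, ?_⟩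
    · simpa using smul_mem _ (t / 2) (mem_span_singleton_self u)
    · rw [map_add, map_smul, hσu, eq_add_of_sub_eq' ht.symm]
      module
  choose y hy using hfix
  have := Module.finite_of_finrank_eq_succ hW
  let b := finBasisOfFinrankEq ℝ (V ⧸ ℝ ∙ u) hW
  have hLI : LinearIndependent ℝ ![y (b 0), y (b 1)] := by
    refine LinearIndependent.of_comp (ℝ ∙ u).mkQ ?_
    convert b.linearIndependent using 1
    ext i
    fin_cases i <;> simp [hy]
  have hσ1 := hD.eq_one_of_apply_eq_s9 hLI hσD one_pos one_pos (c := 0)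
    (by simp [hy]) (by simp [hy])
  replace hσu : u = -u := by rw [← hσu, hσ1]; rfl
  exact hu (by linear_combination (norm := module) (1 / 2 : ℝ) • hσu)

theorem det_lineQuotMap_eq_neg_one (hD : IsRotationGroup D) (hu : u ≠ 0)
    (hW : finrank ℝ (V ⧸ ℝ ∙ u) = 2) {σ : V ≃ₗ[ℝ] V} (hσD : σ ∈ D) (hσσ : σ * σ = 1)
    (hσu : σ u = -u) {w : V} (hw : w ∉ ℝ ∙ u) {b c : ℝ} (hb : 0 < b)
    (hσw : σ w = b • w + c • u) (h : σ u ∈ ℝ ∙ u) :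
    LinearMap.det (lineQuotMap u σ h) = -1 := by
  have := Module.finite_of_finrank_eq_succ hW
  refine LinearMap.det_eq_neg_one_of_mul_self_eq_one hW ?_ (hD.lineQuotMap_ne_one hu hW hσD hσu h)
    fun hneg => hw ?_
  · ext x
    simp only [LinearMap.comp_apply, mkQ_apply, Module.End.mul_apply, lineQuotMap_mk,
      Module.End.one_apply]
    rw [← LinearEquiv.mul_apply, hσσ]
    rfl
  · have h1 := LinearMap.congr_fun hneg (Submodule.Quotient.mk w)
    simp only [lineQuotMap_mk, hσw, Submodule.Quotient.mk_add, Submodule.Quotient.mk_smul,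
      (Submodule.Quotient.mk_eq_zero _).mpr (mem_span_singleton_self u), smul_zero, add_zero,
      LinearMap.neg_apply, Module.End.one_apply] at h1
    have h2 : (b + 1) • (Submodule.Quotient.mk w : V ⧸ ℝ ∙ u) = 0 := by
      rw [add_smul, one_smul, h1, neg_add_cancel]
    exact (Submodule.Quotient.mk_eq_zero _).mp ((smul_eq_zero.mp h2).resolve_left (by positivity))

theorem mul_self_eq_one_of_det_lineQuotMap_neg (hD : IsRotationGroup D) (hu : u ≠ 0)
    (hW : finrank ℝ (V ⧸ ℝ ∙ u) = 2) {d : V ≃ₗ[ℝ] V} (hd : d ∈ D) (h : d u ∈ ℝ ∙ u)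
    (hdet : LinearMap.det (lineQuotMap u d h) < 0) : d * d = 1 := by
  have := Module.finite_of_finrank_eq_succ hW
  obtain ⟨μ, hμ, hμd⟩ := LinearMap.exists_pos_hasEigenvalue_of_det_neg hW hdet
  obtain ⟨z, hzu, hz⟩ := exists_notMem_sub_smul_mem_of_hasEigenvalue_mapQ _ hμd
  obtain ⟨a, ha0, ha⟩ := exists_ne_zero_apply_eq_smul hu h
  have hdL : ∀ x ∈ ℝ ∙ u, d x ∈ ℝ ∙ u := fun x hx => by
    obtain ⟨t, rfl⟩ := mem_span_singleton.mp hx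
    rw [map_smul]
    exact smul_mem _ t h
  have hz2 : (d * d) z - (μ * μ) • z ∈ ℝ ∙ u := by
    have : (d * d) z - (μ * μ) • z = d (d z - μ • z) + μ • (d z - μ • z) := by
      simp only [LinearEquiv.mul_apply, map_sub, map_smul]
      module
    rw [this]
    exact add_mem (hdL _ hz) (smul_mem _ μ hz)
  obtain ⟨c, hc⟩ := mem_span_singleton.mp hz2
  have hLI := (linearIndependent_pair_iff_notMem_span_singleton hu).mpr hzu
  refine hD.eq_one_of_apply_eq_s9 hLI (D.mul_mem hd hd) (mul_self_pos.mpr ha0) (mul_pos hμ hμ) ?_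
    (by rw [hc, add_sub_cancel])
  rw [LinearEquiv.mul_apply, ha, map_smul, ha, smul_smul]

theorem eq_one_of_apply_eq_smul (hD : IsRotationGroup D) (hdim : finrank ℝ V = 3)
    {g : V ≃ₗ[ℝ] V} (hg : g ∈ D) (hu : u ≠ 0) {l : ℝ} (hl : 0 < l) (hgu : g u = l • u) :
    l = 1 := by
  have := Module.finite_of_finrank_eq_succ hdim
  have hW : finrank ℝ (V ⧸ ℝ ∙ u) = 2 := finrank_quotient_span_singleton hdim hu
  obtain ⟨w, hLI⟩ := exists_linearIndependent_pair_of_one_lt_finrank (R := ℝ) (by omega) hu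
  have hw := (linearIndependent_pair_iff_notMem_span_singleton hu).mp hLI
  obtain ⟨σ, hσD, hσσ, hσu, b, hb, c, hσw⟩ := hD.exists_half_turn hLI
  have hσL : σ u ∈ ℝ ∙ u := by rw [hσu]; exact neg_mem (mem_span_singleton_self u)
  have hgL : g u ∈ ℝ ∙ u := by rw [hgu]; exact smul_mem _ l (mem_span_singleton_self u)
  have hσgL : (σ * g) u ∈ ℝ ∙ u := by
    rw [LinearEquiv.mul_apply, hgu, map_smul, hσu]
    exact smul_mem _ l (neg_mem (mem_span_singleton_self u))
  have hll : l * l = 1 := by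
    refine smul_left_injective ℝ hu ?_
    rcases (det_lineQuotMap_ne_zero hu hgL).lt_or_gt with hneg | hpos
    · have := LinearEquiv.congr_fun (hD.mul_self_eq_one_of_det_lineQuotMap_neg hu hW hg hgL hneg) u
      simpa [hgu, smul_smul] using this
    · have hdet : LinearMap.det (lineQuotMap u (σ * g) hσgL) < 0 := by
        rw [lineQuotMap_mul hσL hgL, map_mul,
          hD.det_lineQuotMap_eq_neg_one hu hW hσD hσσ hσu hw hb hσw]
        linarith
      have := LinearEquiv.congr_fun
        (hD.mul_self_eq_one_of_det_lineQuotMap_neg hu hW (D.mul_mem hσD hg) hσgL hdet) u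
      simpa [hgu, hσu, smul_smul] using this
  nlinarith

end IsRotationGroup

theorem stmt9 {V : Type*} [AddCommGroup V] [Module ℝ V]
    (hdim : Module.finrank ℝ V = 3)
    (D : Subgroup (V ≃ₗ[ℝ] V)) (hD : IsRotationGroup D)
    (v : V) (hv : v ≠ 0) (u : V) (hu : u ≠ 0) :
    ∃! x : V, (∃ d : V ≃ₗ[ℝ] V, d ∈ D ∧ d v = x) ∧ x ∈ Ray' u := by
  have := Module.finite_of_finrank_eq_succ hdim
  obtain ⟨w, hvw⟩ := exists_linearIndependent_pair_of_one_lt_finrank (R := ℝ) (by omega) hv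
  obtain ⟨w', huw'⟩ := exists_linearIndependent_pair_of_one_lt_finrank (R := ℝ) (by omega) hu
  obtain ⟨d, hdD, hdv, -⟩ := hD.exists_mem_ray'_halfPlane hvw huw'
  refine ⟨d v, ⟨⟨d, hdD, rfl⟩, hdv⟩, ?_⟩
  rintro _ ⟨⟨d', hd'D, rfl⟩, hd'v⟩
  obtain ⟨c, hc, hcu⟩ := exists_pos_smul_of_mem_ray' hdv (by simpa using hv)
  obtain ⟨c', hc', hc'u⟩ := exists_pos_smul_of_mem_ray' hd'v (by simpa using hv)
  have hd'd : (d' * d⁻¹) (d v) = (c' / c) • d v := by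
    rw [LinearEquiv.mul_apply, show d⁻¹ (d v) = v from d.symm_apply_apply v, hc'u, hcu,
      smul_smul, div_mul_cancel₀ _ hc.ne']
  have := hD.eq_one_of_apply_eq_smul hdim (D.mul_mem hd'D (D.inv_mem hdD)) (by simpa using hv)
    (div_pos hc' hc) hd'd
  rw [hc'u, hcu, (div_eq_one_iff_eq hc.ne').mp this]
end

section
/- If two nonzero vectors v, w are interchanged by a rotation (r v = w and r w = v for some r ∈ D), then α_v(w) = α_w(v). -/
/-! Conjugating `r_v` by `r` gives the half-turn `s` about `w`, with `s x + x = α_v (r⁻¹ x) • w`.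
Hence `s * r_w` is the transvection `x ↦ x + γ x • w` with `γ = α_v ∘ r⁻¹ ∘ r_w - α_w`, and
`γ w = α_v v - α_w w = 2 - 2 = 0`. A transvection along `w` fixes the ray through `w` and maps
each half-plane bounded by `ℝ w` onto itself, so by the uniqueness in `IsRotationGroup` it is the
identity: `γ = 0`. Evaluating at `v` gives `2 α_w(v) - α_v(w) = α_w(v)`. -/

open Module

section HalfTurn

variable {R V : Type*} [CommRing R] [AddCommGroup V] [Module R V]

theorem conj_add_self_eq_smul {s : V ≃ₗ[R] V} {α : Dual R V} {v : V}
    (hs : ∀ x, s x + x = α x • v) (r : V ≃ₗ[R] V) (x : V) :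
    (r * s * r⁻¹) x + x = (α ∘ₗ r.symm.toLinearMap) x • r v := by
  have := congrArg r (hs (r.symm x))
  simp only [map_add, map_smul, r.apply_symm_apply] at this
  exact this

theorem mul_eq_transvection_of_add_self_eq_smul {s t : V ≃ₗ[R] V} {f g : Dual R V} {w : V}
    (hs : ∀ x, s x + x = f x • w) (ht : ∀ x, t x + x = g x • w)
    (hw : (f ∘ₗ t.toLinearMap - g) w = 0) :
    s * t = LinearEquiv.transvection hw := by
  ext x
  have hsx := hs (t x)
  have htx := ht x
  simp only [LinearEquiv.mul_apply, LinearEquiv.transvection.coe_apply,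
    LinearMap.transvection.apply, LinearMap.sub_apply, LinearMap.comp_apply,
    LinearEquiv.coe_coe, sub_smul]
  linear_combination (norm := module) hsx - htx

end HalfTurn

theorem apply_self_eq_two_of_add_self_eq_smul {K V : Type*} [Field K] [AddCommGroup V]
    [Module K V] {s : V ≃ₗ[K] V} {α : Dual K V} {v : V} (hv : v ≠ 0)
    (hs : ∀ x, s x + x = α x • v) (hsv : s v = v) : α v = 2 := by
  refine smul_left_injective K hv ?_
  simp only [← hs v, hsv, two_smul]

section Transvection

variable {V : Type*} [AddCommGroup V] [Module ℝ V] {f : Dual ℝ V} {w : V}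

theorem image_transvection_ray (hfw : f w = 0) :
    LinearEquiv.transvection hfw '' Ray' w = Ray' w := by
  refine Set.EqOn.image_eq_self ?_
  rintro _ ⟨c, -, rfl⟩
  simp [LinearMap.transvection.apply, hfw]

theorem image_transvection_halfPlane (hfw : f w = 0) (u : V) :
    LinearEquiv.transvection hfw '' HalfPlane w u = HalfPlane w u := by
  ext x
  simp only [Set.mem_image, HalfPlane, Set.mem_ofPred_eq, LinearEquiv.transvection.coe_apply,
    LinearMap.transvection.apply]
  constructor
  · rintro ⟨_, ⟨a, b, hb, rfl⟩, rfl⟩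
    refine ⟨a + b * f u, b, hb, ?_⟩
    simp only [map_add, map_smul, hfw, smul_eq_mul]
    module
  · rintro ⟨a, b, hb, rfl⟩
    refine ⟨(a - b * f u) • w + b • u, ⟨a - b * f u, b, hb, rfl⟩, ?_⟩
    simp only [map_add, map_smul, hfw, smul_eq_mul]
    module

end Transvection

namespace IsRotationGroup

variable {V : Type*} [AddCommGroup V] [Module ℝ V] {D : Subgroup (V ≃ₗ[ℝ] V)}

theorem eq_one_of_image_eq (hD : IsRotationGroup D) {w u : V}
    (hwu : LinearIndependent ℝ ![w, u]) {d : V ≃ₗ[ℝ] V} (hd : d ∈ D)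
    (hH : d '' HalfPlane w u = HalfPlane w u) (hR : d '' Ray' w = Ray' w) : d = 1 := by
  obtain ⟨e, -, he⟩ := hD w u w u hwu hwu
  rw [he d ⟨hd, hH, hR⟩, he 1 ⟨one_mem D, by simp, by simp⟩]

theorem eq_zero_of_transvection_mem (hD : IsRotationGroup D) (hdim : 1 < finrank ℝ V)
    {f : Dual ℝ V} {w : V} (hw : w ≠ 0) (hfw : f w = 0)
    (hmem : LinearEquiv.transvection hfw ∈ D) : f = 0 := by
  obtain ⟨u, hwu⟩ := exists_linearIndependent_pair_of_one_lt_finrank hdim hw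
  have h1 := hD.eq_one_of_image_eq hwu hmem (image_transvection_halfPlane hfw u)
    (image_transvection_ray hfw)
  ext x
  have hx := LinearEquiv.congr_fun h1 x
  simp only [LinearEquiv.transvection.coe_apply, LinearMap.transvection.apply,
    LinearEquiv.coe_one, id_eq, add_eq_left, smul_eq_zero, hw, or_false] at hx
  exact hx

end IsRotationGroup

theorem stmt12_general {V : Type*} [AddCommGroup V] [Module ℝ V]
    (hdim : Module.finrank ℝ V = 3)
    (D : Subgroup (V ≃ₗ[ℝ] V)) (hD : IsRotationGroup D)
    (v w : V) (hv : v ≠ 0) (hw : w ≠ 0)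
    (r : V ≃ₗ[ℝ] V) (hr : r ∈ D) (hrv : r v = w) (hrw : r w = v)
    (rv : V ≃ₗ[ℝ] V) (hrvD : rv ∈ D) (hrv1 : rv v = v)
    (rw : V ≃ₗ[ℝ] V) (hrwD : rw ∈ D) (hrw1 : rw w = w)
    (αv : V →ₗ[ℝ] ℝ) (hαv : ∀ x : V, rv x + x = αv x • v)
    (αw : V →ₗ[ℝ] ℝ) (hαw : ∀ x : V, rw x + x = αw x • w) :
    αv w = αw v := by
  have hαvv := apply_self_eq_two_of_add_self_eq_smul hv hαv hrv1
  have hαww := apply_self_eq_two_of_add_self_eq_smul hw hαw hrw1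
  have hrsw : r.symm w = v := r.symm_apply_eq.mpr hrv.symm
  have hrsv : r.symm v = w := r.symm_apply_eq.mpr hrw.symm
  have hs := conj_add_self_eq_smul hαv r
  rw [hrv] at hs
  have hγ : (αv ∘ₗ r.symm.toLinearMap ∘ₗ rw.toLinearMap - αw) w = 0 := by
    simp [hrw1, hrsw, hαvv, hαww]
  have hmem : LinearEquiv.transvection hγ ∈ D := by
    rw [← mul_eq_transvection_of_add_self_eq_smul hs hαw hγ]
    exact mul_mem (mul_mem (mul_mem hr hrvD) (inv_mem hr)) hrwD
  have hγv := LinearMap.congr_fun (hD.eq_zero_of_transvection_mem (by omega) hw hγ hmem) v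
  have hrwv : rw v = αw v • w - v := eq_sub_of_add_eq (hαw v)
  simp only [LinearMap.sub_apply, LinearMap.comp_apply, LinearEquiv.coe_coe, hrwv, map_sub,
    map_smul, hrsw, hrsv, smul_eq_mul, hαvv, LinearMap.zero_apply] at hγv
  linarith

theorem stmt12 {V : Type*} [AddCommGroup V] [Module ℝ V]
    (hdim : Module.finrank ℝ V = 3)
    (D : Subgroup (V ≃ₗ[ℝ] V)) (hD : IsRotationGroup D)
    (v w : V) (hv : v ≠ 0) (hw : w ≠ 0)
    (r : V ≃ₗ[ℝ] V) (hr : r ∈ D) (hrv : r v = w) (hrw : r w = v)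
    (rv : V ≃ₗ[ℝ] V) (hrvD : rv ∈ D) (hrv1 : rv v = v)
    (hrv2 : ∀ u : V, Perp D u v → rv u = -u)
    (rw : V ≃ₗ[ℝ] V) (hrwD : rw ∈ D) (hrw1 : rw w = w)
    (hrw2 : ∀ u : V, Perp D u w → rw u = -u)
    (αv : V →ₗ[ℝ] ℝ) (hαv : ∀ x : V, rv x + x = αv x • v)
    (αw : V →ₗ[ℝ] ℝ) (hαw : ∀ x : V, rw x + x = αw x • w) :
    αv w = αw v :=
  stmt12_general hdim D hD v w hv hw r hr hrv hrw rv hrvD hrv1 rw hrwD hrw1 αv hαv αw hαw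
end
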